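/- For any real θ > 0 and positive integer n, θ(log(1+n/θ) - 1 + θ/(n+θ)) + n/(2(θ+n)) - 1 ≤ θ ∑_{i=1}^n 1/(θ+i-1) - θ² ∑_{i=1}^n 1/(θ+i-1)² ≤ θ(log(1+n/θ) - 1 + θ/(n+θ)) + n/(θ+n). -/

import Mathlib

/-!
Compare each term `1 / t`, `t = θ + i`, with `log (t + 1) - log t`, which telescopes to
`log (1 + n / θ)`: this increment lies between `1 / (t + 1)` and the trapezoid value
`(1 / t + 1 / (t + 1)) / 2`. Likewise `1 / t ^ 2` lies between `1 / t - 1 / (t + 1)` and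
`(1 + 1 / θ) (1 / t - 1 / (t + 1))` (as `θ ≤ t`), and `θ (1 / t - 1 / (t + 1))` telescopes to
`n / (θ + n) ≤ 1`.
-/

open Real Finset

lemma log_add_one_sub_log_le {t : ℝ} (ht : 0 < t) :
    log (t + 1) - log t ≤ (1 / t + 1 / (t + 1)) / 2 := by
  -- `log y ≤ sinh (log y) = (y - y⁻¹) / 2` at `y = (t + 1) / t`
  have hy : 0 ≤ log ((t + 1) / t) := log_nonneg (by rw [le_div_iff₀ ht]; linarith)
  have h := self_le_sinh_iff.mpr hy
  rw [sinh_log (by positivity), log_div (by positivity) ht.ne'] at h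
  calc log (t + 1) - log t ≤ ((t + 1) / t - ((t + 1) / t)⁻¹) / 2 := h
    _ = (1 / t + 1 / (t + 1)) / 2 := by field_simp; ring

lemma one_div_add_one_le_log_add_one_sub_log {t : ℝ} (ht : 0 < t) :
    1 / (t + 1) ≤ log (t + 1) - log t := by
  have h := one_sub_inv_le_log_of_pos (x := (t + 1) / t) (by positivity)
  rw [log_div (by positivity) ht.ne'] at h
  calc 1 / (t + 1) = 1 - ((t + 1) / t)⁻¹ := by field_simp; ring
    _ ≤ _ := h

lemma one_div_sub_one_div_add_one_le_one_div_sq {t : ℝ} (ht : 0 < t) :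
    1 / t - 1 / (t + 1) ≤ 1 / t ^ 2 := by
  rw [div_sub_div _ _ ht.ne' (by positivity), div_le_div_iff₀ (by positivity) (by positivity)]
  nlinarith

lemma sq_div_sq_le_of_le {θ t : ℝ} (hθ : 0 < θ) (hθt : θ ≤ t) :
    θ ^ 2 / t ^ 2 ≤ (θ ^ 2 + θ) * (1 / t - 1 / (t + 1)) := by
  have ht : 0 < t := hθ.trans_le hθt
  rw [div_sub_div _ _ ht.ne' (by positivity), mul_div_assoc',
    div_le_div_iff₀ (by positivity) (by positivity)]
  nlinarith [mul_le_mul_of_nonneg_left hθt (by positivity : 0 ≤ θ * t ^ 2)]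

lemma sum_range_log_add_one_sub_log {θ : ℝ} (hθ : 0 < θ) (n : ℕ) :
    ∑ i ∈ range n, (log (θ + i + 1) - log (θ + i)) = log (1 + n / θ) := by
  have h := sum_range_sub (fun i : ℕ => log (θ + i)) n
  push_cast [← add_assoc] at h
  rw [h, add_zero, ← log_div (by positivity) hθ.ne']
  congr 1
  field_simp

lemma mul_sum_range_one_div_sub_one_div_add_one {θ : ℝ} (hθ : 0 < θ) (n : ℕ) :
    θ * ∑ i ∈ range n, (1 / (θ + i) - 1 / (θ + i + 1)) = n / (θ + n) := by
  have h := sum_range_sub' (fun i : ℕ => 1 / (θ + i)) n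
  push_cast [← add_assoc] at h
  rw [h, add_zero]
  field_simp
  ring

lemma mul_sum_range_one_div_le {θ : ℝ} (hθ : 0 < θ) (n : ℕ) :
    θ * ∑ i ∈ range n, 1 / (θ + i) ≤ θ * log (1 + n / θ) + n / (θ + n) := by
  rw [← sum_range_log_add_one_sub_log hθ, ← mul_sum_range_one_div_sub_one_div_add_one hθ,
    ← mul_add, ← sum_add_distrib]
  gcongr with i
  linarith [one_div_add_one_le_log_add_one_sub_log (by positivity : 0 < θ + i)]

lemma le_mul_sum_range_one_div {θ : ℝ} (hθ : 0 < θ) (n : ℕ) :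
    θ * log (1 + n / θ) + n / (2 * (θ + n)) ≤ θ * ∑ i ∈ range n, 1 / (θ + i) := by
  rw [← sum_range_log_add_one_sub_log hθ, div_mul_eq_div_div_swap,
    ← mul_sum_range_one_div_sub_one_div_add_one hθ, mul_div_assoc, ← mul_add, sum_div,
    ← sum_add_distrib]
  gcongr with i
  linarith [log_add_one_sub_log_le (by positivity : 0 < θ + i)]

lemma mul_div_le_sq_mul_sum_range_one_div_sq {θ : ℝ} (hθ : 0 < θ) (n : ℕ) :
    θ * (n / (θ + n)) ≤ θ ^ 2 * ∑ i ∈ range n, 1 / (θ + i) ^ 2 := by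
  rw [← mul_sum_range_one_div_sub_one_div_add_one hθ, ← mul_assoc, ← sq]
  gcongr with i
  exact one_div_sub_one_div_add_one_le_one_div_sq (by positivity)

lemma sq_mul_sum_range_one_div_sq_le {θ : ℝ} (hθ : 0 < θ) (n : ℕ) :
    θ ^ 2 * ∑ i ∈ range n, 1 / (θ + i) ^ 2 ≤ (θ + 1) * (n / (θ + n)) := by
  rw [← mul_sum_range_one_div_sub_one_div_add_one hθ, ← mul_assoc, add_one_mul, ← sq,
    mul_sum, mul_sum]
  refine sum_le_sum fun i _ => ?_
  rw [mul_one_div]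
  exact sq_div_sq_le_of_le hθ (le_add_of_nonneg_right i.cast_nonneg)

theorem stmt_11 (θ : ℝ) (hθ : 0 < θ) (n : ℕ) :
    θ * (Real.log (1 + n / θ) - 1 + θ / (n + θ)) + n / (2 * (θ + n)) - 1 ≤
      θ * ∑ i ∈ Finset.range n, 1 / (θ + i)
        - θ ^ 2 * ∑ i ∈ Finset.range n, 1 / (θ + i) ^ 2 ∧
    θ * ∑ i ∈ Finset.range n, 1 / (θ + i)
        - θ ^ 2 * ∑ i ∈ Finset.range n, 1 / (θ + i) ^ 2 ≤
      θ * (Real.log (1 + n / θ) - 1 + θ / (n + θ)) + n / (θ + n) := by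
  have hθn : 0 < θ + n := by positivity
  have hq : θ / (n + θ) = 1 - n / (θ + n) := by field_simp; ring
  have hq_le : (n : ℝ) / (θ + n) ≤ 1 := (div_le_one hθn).mpr (by linarith)
  rw [hq]
  constructor
  · linarith [le_mul_sum_range_one_div hθ n, sq_mul_sum_range_one_div_sq_le hθ n]
  · linarith [mul_sum_range_one_div_le hθ n, mul_div_le_sq_mul_sum_range_one_div_sq hθ n]
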